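/- Let X be a countable set, let μ, ν ∈ Prob(X), and let φ, ψ be transition probabilities on X. If there exist ε>0 and x₀ ∈ X such that ‖φ(x,·) − φ(x₀,·)‖₁ < ε for every x ∈ Supp(μ) ∪ Supp(ν), then ‖(μ*φ)*ψ − (ν*φ)*ψ‖₁ < 2ε. -/

import Mathlib

/-!
Convolving with a transition probability is a contraction for the `ℓ¹` distance, which disposes
of `ψ`. Since `μ` has mass one, `μ * φ - φ x₀` is the `μ`-average of `φ x - φ x₀`, so
`‖μ * φ - φ x₀‖₁ < ε`, strictly because `μ` charges some point of its support; the same holds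
for `ν`, and the triangle inequality through `φ x₀` gives `2ε`.
-/

noncomputable def l1dist {X : Type*} (μ ν : X → ℝ) : ℝ := ∑' y, |μ y - ν y|

def IsProb {X : Type*} (μ : X → ℝ) : Prop := (∀ x, 0 ≤ μ x) ∧ HasSum μ 1

def IsTransProb {X : Type*} (P : X → X → ℝ) : Prop := ∀ x, IsProb (P x)

noncomputable def mconv {X : Type*} (μ : X → ℝ) (φ : X → X → ℝ) : X → ℝ :=
  fun y => ∑' x, μ x * φ x y

noncomputable def kpow {X : Type*} [DecidableEq X] (P : X → X → ℝ) : ℕ → X → X → ℝ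
  | 0 => fun x y => if x = y then 1 else 0
  | n + 1 => fun x y => ∑' z, kpow P n x z * P z y

section DoubleSeries

variable {X Y : Type*}

theorem abs_tsum_le_tsum_abs {f : X → ℝ} (hf : Summable f) : |∑' x, f x| ≤ ∑' x, |f x| := by
  simpa only [Real.norm_eq_abs] using norm_tsum_le_tsum_norm hf.norm

theorem summable_abs_tsum {g : X → Y → ℝ} (hg : Summable (Function.uncurry g)) :
    Summable fun y => |∑' x, g x y| := by
  have hbound : Summable fun y => ∑' x, |g x y| := hg.abs.prod_symm.prod
  refine Summable.of_nonneg_of_le (fun _ => abs_nonneg _) (fun y => ?_) hbound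
  exact abs_tsum_le_tsum_abs (hg.prod_symm.prod_factor y)

theorem tsum_abs_tsum_le {g : X → Y → ℝ} (hg : Summable (Function.uncurry g)) :
    ∑' y, |∑' x, g x y| ≤ ∑' x, ∑' y, |g x y| := by
  have hbound : Summable fun y => ∑' x, |g x y| := hg.abs.prod_symm.prod
  calc ∑' y, |∑' x, g x y| ≤ ∑' y, ∑' x, |g x y| :=
        (summable_abs_tsum hg).tsum_le_tsum
          (fun y => abs_tsum_le_tsum_abs (hg.prod_symm.prod_factor y)) hbound
    _ = ∑' x, ∑' y, |g x y| := hg.abs.tsum_comm (f := fun x y => |g x y|)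

theorem summable_uncurry_mul {w : X → ℝ} {f : X → Y → ℝ} {C : ℝ} (hw : Summable w)
    (hf : ∀ x, Summable (f x)) (hC : ∀ x, ∑' y, |f x y| ≤ C) :
    Summable (Function.uncurry fun x y => w x * f x y) := by
  rw [← summable_abs_iff, summable_prod_of_nonneg fun _ => abs_nonneg _]
  simp only [Function.uncurry_apply_pair, abs_mul, tsum_mul_left]
  exact ⟨fun x => (hf x).abs.mul_left _,
    hw.abs.mul_right C |>.of_nonneg_of_le (fun x => by positivity)
      fun x => mul_le_mul_of_nonneg_left (hC x) (abs_nonneg _)⟩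

end DoubleSeries

section Markov

variable {X : Type*}

theorem IsProb.le_one {μ : X → ℝ} (hμ : IsProb μ) (x : X) : μ x ≤ 1 :=
  le_hasSum hμ.2 x fun y _ => hμ.1 y

theorem IsProb.tsum_abs {μ : X → ℝ} (hμ : IsProb μ) : ∑' x, |μ x| = 1 := by
  simp only [abs_of_nonneg (hμ.1 _), hμ.2.tsum_eq]

theorem IsProb.exists_pos {μ : X → ℝ} (hμ : IsProb μ) : ∃ x, 0 < μ x := by
  by_contra! hμ0
  have hzero : μ = 0 := funext fun x => le_antisymm (hμ0 x) (hμ.1 x)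
  exact one_ne_zero (hμ.2.unique (hzero ▸ hasSum_zero))

theorem l1dist_comm (A B : X → ℝ) : l1dist A B = l1dist B A := by
  simp only [l1dist, abs_sub_comm]

theorem l1dist_triangle {A B C : X → ℝ} (hA : Summable A) (hB : Summable B)
    (hC : Summable C) : l1dist A B ≤ l1dist A C + l1dist C B := by
  have hAC := (hA.sub hC).abs
  have hCB := (hC.sub hB).abs
  rw [l1dist, l1dist, l1dist, ← hAC.tsum_add hCB]
  exact ((hA.sub hB).abs).tsum_le_tsum (fun y => abs_sub_le _ _ _) (hAC.add hCB)

theorem l1dist_le_two {A B : X → ℝ} (hA : IsProb A) (hB : IsProb B) : l1dist A B ≤ 2 := by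
  have hsum := hA.2.summable.abs.add hB.2.summable.abs
  calc l1dist A B ≤ ∑' x, (|A x| + |B x|) :=
        (hA.2.summable.sub hB.2.summable).abs.tsum_le_tsum (fun x => abs_sub _ _) hsum
    _ = 2 := by rw [hA.2.summable.abs.tsum_add hB.2.summable.abs, hA.tsum_abs, hB.tsum_abs]; norm_num

theorem summable_mul_of_isTransProb {A : X → ℝ} {ψ : X → X → ℝ} (hA : Summable A)
    (hψ : IsTransProb ψ) (y : X) : Summable fun x => A x * ψ x y :=
  hA.abs.of_norm_bounded fun x => by
    rw [Real.norm_eq_abs, abs_mul, abs_of_nonneg ((hψ x).1 y)]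
    exact mul_le_of_le_one_right (abs_nonneg _) ((hψ x).le_one y)

theorem summable_uncurry_mul_of_isTransProb {A : X → ℝ} {ψ : X → X → ℝ} (hA : Summable A)
    (hψ : IsTransProb ψ) : Summable (Function.uncurry fun x y => A x * ψ x y) :=
  summable_uncurry_mul hA (fun x => (hψ x).2.summable) fun x => (hψ x).tsum_abs.le

theorem summable_mconv {A : X → ℝ} {ψ : X → X → ℝ} (hA : Summable A) (hψ : IsTransProb ψ) :
    Summable (mconv A ψ) :=
  summable_abs_iff.mp (summable_abs_tsum (summable_uncurry_mul_of_isTransProb hA hψ))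

theorem mconv_sub {A B : X → ℝ} {ψ : X → X → ℝ} (hA : Summable A) (hB : Summable B)
    (hψ : IsTransProb ψ) : mconv (A - B) ψ = mconv A ψ - mconv B ψ := by
  funext y
  simp only [mconv, Pi.sub_apply, sub_mul]
  exact (summable_mul_of_isTransProb hA hψ y).tsum_sub (summable_mul_of_isTransProb hB hψ y)

theorem tsum_abs_mconv_le {A : X → ℝ} {ψ : X → X → ℝ} (hA : Summable A)
    (hψ : IsTransProb ψ) : ∑' y, |mconv A ψ y| ≤ ∑' x, |A x| := by
  refine (tsum_abs_tsum_le (summable_uncurry_mul_of_isTransProb hA hψ)).trans_eq ?_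
  simp only [abs_mul, tsum_mul_left, (hψ _).tsum_abs, mul_one]

theorem l1dist_mconv_le {A B : X → ℝ} {ψ : X → X → ℝ} (hA : Summable A) (hB : Summable B)
    (hψ : IsTransProb ψ) : l1dist (mconv A ψ) (mconv B ψ) ≤ l1dist A B := by
  have hcontract := tsum_abs_mconv_le (A := A - B) (hA.sub hB) hψ
  rw [mconv_sub hA hB hψ] at hcontract
  exact hcontract

theorem tsum_mul_lt_of_isProb {μ d : X → ℝ} {ε : ℝ} (hμ : IsProb μ)
    (hd : Summable fun x => μ x * d x) (h : ∀ x, 0 < μ x → d x < ε) :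
    ∑' x, μ x * d x < ε := by
  obtain ⟨i, hi⟩ := hμ.exists_pos
  have hle : ∀ x, μ x * d x ≤ μ x * ε := fun x => by
    rcases (hμ.1 x).eq_or_lt with hx | hx
    · simp [← hx]
    · exact mul_le_mul_of_nonneg_left (h x hx).le hx.le
  calc ∑' x, μ x * d x < ∑' x, μ x * ε :=
        hd.tsum_lt_tsum hle (mul_lt_mul_of_pos_left (h i hi) hi) (hμ.2.summable.mul_right ε)
    _ = ε := by rw [tsum_mul_right, hμ.2.tsum_eq, one_mul]

theorem l1dist_mconv_lt {μ : X → ℝ} {φ : X → X → ℝ} {ε : ℝ} {x₀ : X}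
    (hμ : IsProb μ) (hφ : IsTransProb φ) (h : ∀ x, 0 < μ x → l1dist (φ x) (φ x₀) < ε) :
    l1dist (mconv μ φ) (φ x₀) < ε := by
  have hμs := hμ.2.summable
  have hφs : ∀ x, Summable (φ x) := fun x => (hφ x).2.summable
  -- `μ` has total mass one, so `φ x₀` is itself the `μ`-average of the constant kernel `φ x₀`.
  have hdiff : ∀ z, mconv μ φ z - φ x₀ z = ∑' x, μ x * (φ x z - φ x₀ z) := fun z => by
    simp only [mconv, mul_sub]
    rw [(summable_mul_of_isTransProb hμs hφ z).tsum_sub (hμs.mul_right _), tsum_mul_right,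
      hμ.2.tsum_eq, one_mul]
  have hjoint := summable_uncurry_mul hμs (fun x => (hφs x).sub (hφs x₀))
    fun x => l1dist_le_two (hφ x) (hφ x₀)
  have hweighted : Summable fun x => μ x * l1dist (φ x) (φ x₀) :=
    (hμs.mul_right 2).of_nonneg_of_le
      (fun x => mul_nonneg (hμ.1 x) (tsum_nonneg fun _ => abs_nonneg _))
      fun x => mul_le_mul_of_nonneg_left (l1dist_le_two (hφ x) (hφ x₀)) (hμ.1 x)
  calc l1dist (mconv μ φ) (φ x₀) = ∑' z, |∑' x, μ x * (φ x z - φ x₀ z)| := by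
        simp only [l1dist, hdiff]
    _ ≤ ∑' x, ∑' z, |μ x * (φ x z - φ x₀ z)| := tsum_abs_tsum_le hjoint
    _ = ∑' x, μ x * l1dist (φ x) (φ x₀) := by
        simp only [l1dist, abs_mul, tsum_mul_left, abs_of_nonneg (hμ.1 _)]
    _ < ε := tsum_mul_lt_of_isProb hμ hweighted h

end Markov

theorem stmt7_general {X : Type*} (μ ν : X → ℝ) (hμ : IsProb μ) (hν : IsProb ν)
    (φ ψ : X → X → ℝ) (hφ : IsTransProb φ) (hψ : IsTransProb ψ)
    (ε : ℝ) (x₀ : X)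
    (h : ∀ x : X, (0 < μ x ∨ 0 < ν x) → l1dist (φ x) (φ x₀) < ε) :
    l1dist (mconv (mconv μ φ) ψ) (mconv (mconv ν φ) ψ) < 2 * ε := by
  have hμφ := summable_mconv hμ.2.summable hφ
  have hνφ := summable_mconv hν.2.summable hφ
  calc l1dist (mconv (mconv μ φ) ψ) (mconv (mconv ν φ) ψ)
        ≤ l1dist (mconv μ φ) (mconv ν φ) := l1dist_mconv_le hμφ hνφ hψ
    _ ≤ l1dist (mconv μ φ) (φ x₀) + l1dist (φ x₀) (mconv ν φ) :=
        l1dist_triangle hμφ hνφ (hφ x₀).2.summable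
    _ < ε + ε := by
        rw [l1dist_comm (φ x₀)]
        exact add_lt_add (l1dist_mconv_lt hμ hφ fun x hx => h x (.inl hx))
          (l1dist_mconv_lt hν hφ fun x hx => h x (.inr hx))
    _ = 2 * ε := by ring

theorem stmt7 {X : Type*} [Countable X] (μ ν : X → ℝ) (hμ : IsProb μ) (hν : IsProb ν)
    (φ ψ : X → X → ℝ) (hφ : IsTransProb φ) (hψ : IsTransProb ψ)
    (ε : ℝ) (hε : 0 < ε) (x₀ : X)
    (h : ∀ x : X, (0 < μ x ∨ 0 < ν x) → l1dist (φ x) (φ x₀) < ε) :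
    l1dist (mconv (mconv μ φ) ψ) (mconv (mconv ν φ) ψ) < 2 * ε :=
  stmt7_general μ ν hμ hν φ ψ hφ hψ ε x₀ h
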